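/- Let P be an integer such that P² − 4 is squarefree, and set A = P² − 2 and B = −P⁴ + 4P² + 1. For every positive integer n with n > (|A| + |B|)³, if σ₂(n) − n² = A·n + B (as integers), then there exists an integer k ≥ 1 such that n = V_{k−1}(P,1) · V_{k+1}(P,1), where both V_{k−1}(P,1) and V_{k+1}(P,1) are prime numbers. -/
import Mathlib

/-- Lucas sequence of the second kind: `V 0 = 2`, `V 1 = P`,
`V (n+2) = P * V (n+1) - Q * V n`. -/
def lucasV (P Q : ℤ) : ℕ → ℤ
  | 0 => 2
  | 1 => P
  | n + 2 => P * lucasV P Q (n + 1) - Q * lucasV P Q n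

lemma lucasV_zero (P Q : ℤ) : lucasV P Q 0 = 2 := rfl
lemma lucasV_one (P Q : ℤ) : lucasV P Q 1 = P := rfl
lemma lucasV_add_two (P Q : ℤ) (n : ℕ) :
    lucasV P Q (n + 2) = P * lucasV P Q (n + 1) - Q * lucasV P Q n := rfl

lemma lucasV_skip (P : ℤ) (m : ℕ) :
    lucasV P 1 (m+4) = (P^2 - 2) * lucasV P 1 (m+2) - lucasV P 1 m := by
  rw [show m+4 = (m+2)+2 from rfl, lucasV_add_two, show m+3 = (m+1)+2 from rfl,
    lucasV_add_two, lucasV_add_two]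
  ring

lemma descent (P : ℤ) (hP : 3 ≤ P) (hsf : Squarefree (P^2 - 4)) :
    ∀ N : ℕ, ∀ x y : ℤ, y ≤ (N : ℤ) → 0 < x → x ≤ y →
      x^2 + y^2 - (P^2-2)*x*y = 4 - (P^2-2)^2 →
      (x = P ∧ y = P) ∨
        ∃ k : ℕ, 1 ≤ k ∧ x = lucasV P 1 (k-1) ∧ y = lucasV P 1 (k+1) := by
  intro N
  induction N with
  | zero => intro x y hyN hx hxy _; exfalso; push_cast at hyN; linarith
  | succ N ih =>
    intro x y hyN hx hxy heq
    have hD : (5:ℤ) ≤ P^2 - 4 := by nlinarith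
    have ha7 : 7 ≤ P^2 - 2 := by linarith
    have hs : (2*y - (P^2-2)*x)^2 = P^2 * ((P^2-4) * (x^2-4)) := by
      linear_combination (4:ℤ) * heq
    have hPs : P ∣ (2*y - (P^2-2)*x) := by
      rw [← Int.pow_dvd_pow_iff (two_ne_zero)]
      exact ⟨(P^2-4) * (x^2-4), hs⟩
    obtain ⟨w, hw⟩ := hPs
    have hw2 : w^2 = (P^2-4) * (x^2-4) := by
      have hP0 : (P:ℤ)^2 ≠ 0 := by positivity
      have h2 : P^2 * w^2 = P^2 * ((P^2-4) * (x^2-4)) := by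
        rw [← hs, hw]; ring
      exact mul_left_cancel₀ hP0 h2
    have hDw : (P^2-4) ∣ w := by
      rw [← hsf.dvd_pow_iff_dvd (two_ne_zero)]
      exact ⟨x^2-4, hw2⟩
    obtain ⟨v, hv⟩ := hDw
    have hDv : (P^2-4) * v^2 = x^2 - 4 := by
      have hD0 : (P^2-4 : ℤ) ≠ 0 := by linarith
      apply mul_left_cancel₀ hD0
      rw [← hw2, hv]; ring
    by_cases hv0 : v = 0
    · subst hv0
      have hx4 : (x-2)*(x+2) = 0 := by linear_combination -hDv
      have hx2 : x = 2 := by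
        rcases mul_eq_zero.mp hx4 with h | h
        · linarith
        · exfalso; linarith
      subst hx2
      have hya2 : (y - (P^2-2))^2 = 0 := by linear_combination heq
      have hya : y = P^2 - 2 := by
        have := pow_eq_zero_iff (n := 2) (by norm_num) |>.mp hya2
        linarith
      right
      refine ⟨1, le_refl 1, ?_, ?_⟩
      · rw [lucasV_zero]
      · rw [show (1+1 : ℕ) = 0 + 2 from rfl, lucasV_add_two, lucasV_one, lucasV_zero, hya]
        ring
    · have hv1 : 1 ≤ v^2 := by
        have h : v ≤ -1 ∨ 1 ≤ v := by omega
        rcases h with h | h <;> nlinarith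
      have hx2P : P^2 ≤ x^2 := by
        have := mul_nonneg (show (0:ℤ) ≤ P^2-4 by linarith) (show (0:ℤ) ≤ v^2-1 by linarith)
        linarith [hDv, this]
      have hxP : P ≤ x := by
        by_contra h
        push_neg at h
        have := mul_pos (show (0:ℤ) < P - x by linarith) (show (0:ℤ) < P + x by linarith)
        linarith
      by_cases hb : 2*y ≤ (P^2-2)*x
      · -- base case
        left
        have t2 : (P^2-2)*x*y = x^2 + y^2 + (P^2-2)^2 - 4 := by linear_combination -heq
        have hy2 : y^2 ≤ x^2 + (P^2-2)^2 - 4 := by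
          have := mul_nonneg (show (0:ℤ) ≤ (P^2-2)*x - 2*y by linarith)
            (show (0:ℤ) ≤ y by linarith)
          linarith [t2, this]
        have t1 : (P^2-2)*x*x ≤ (P^2-2)*x*y := by
          apply mul_le_mul_of_nonneg_left hxy
          have : (0:ℤ) < (P^2-2)*x := mul_pos (by linarith) hx
          linarith
        have t4 : (P^2-4)*x^2 ≤ (P^2-4)*(2*P^2) := by linarith [t1, t2, hy2]
        have t5 : x^2 ≤ 2*P^2 := le_of_mul_le_mul_left t4 (by linarith)
        have t6 : (P^2-4)*v^2 < (P^2-4)*3 := by linarith [hDv, t5, hD]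
        have hv2 : v^2 < 3 := lt_of_mul_lt_mul_left t6 (by linarith)
        have hle : v ≤ 1 := by nlinarith [sq_nonneg (v-2)]
        have hge : -1 ≤ v := by nlinarith [sq_nonneg (v+2)]
        have hvv : v^2 = 1 := by
          have : v = 1 ∨ v = -1 := by omega
          rcases this with rfl | rfl <;> norm_num
        have hxx : (x-P)*(x+P) = 0 := by
          linear_combination (P^2-4) * hvv - hDv
        have hxP' : x = P := by
          rcases mul_eq_zero.mp hxx with h | h
          · linarith
          · exfalso; linarith
        subst hxP'
        refine ⟨rfl, ?_⟩
        have hfac : (y - x) * (y - x*(x^2-3)) = 0 := by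
          linear_combination heq
        rcases mul_eq_zero.mp hfac with h | h
        · linarith
        · exfalso
          have hyx : y = x*(x^2-3) := by linarith
          have := mul_pos hx (show (0:ℤ) < x^2-4 by linarith)
          linarith [hb, hyx, this]
      · -- descent step
        push_neg at hb
        have hxlty : x < y := by
          rcases eq_or_lt_of_le hxy with h | h
          · exfalso
            rw [← h] at hb
            have := mul_pos (show (0:ℤ) < P^2-4 by linarith) hx
            linarith
          · exact h
        have h1 : ((P^2-2)*x - y) * y = x^2 + (P^2-2)^2 - 4 := by linear_combination -heq
        have hy'pos : 0 < (P^2-2)*x - y := by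
          by_contra h
          push_neg at h
          have := mul_nonpos_of_nonpos_of_nonneg h (show (0:ℤ) ≤ y by linarith)
          linarith [h1, this, hx2P, hD, sq_nonneg (P^2-2)]
        have hy'x : (P^2-2)*x - y ≤ x := by
          have key : (x - ((P^2-2)*x - y)) * (x - y) ≤ 0 := by
            have e : (x - ((P^2-2)*x - y)) * (x - y) = (4-P^2)*x^2 + (P^2-2)^2 - 4 := by
              linear_combination -heq
            have := mul_nonneg (show (0:ℤ) ≤ P^2-4 by linarith)
              (show (0:ℤ) ≤ x^2-P^2 by linarith)
            linarith [e, this]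
          by_contra h
          push_neg at h
          have hpr := mul_pos (show (0:ℤ) < ((P^2-2)*x - y) - x by linarith)
            (show (0:ℤ) < y - x by linarith)
          have e2 : (((P^2-2)*x - y) - x) * (y - x) = (x - ((P^2-2)*x - y)) * (x - y) := by
            ring
          rw [e2] at hpr
          linarith [key, hpr]
        have heq' : ((P^2-2)*x - y)^2 + x^2 - (P^2-2)*((P^2-2)*x - y)*x = 4 - (P^2-2)^2 := by
          linear_combination heq
        have hxN : x ≤ (N : ℤ) := by
          push_cast at hyN ⊢; omega
        rcases ih ((P^2-2)*x - y) x hxN hy'pos hy'x heq' with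
          ⟨h1', h2'⟩ | ⟨k, hk1, hk2, hk3⟩
        · right
          refine ⟨2, by norm_num, ?_, ?_⟩
          · rw [lucasV_one]; exact h2'
          · rw [show (2+1 : ℕ) = 1 + 2 from rfl, lucasV_add_two,
              show (1+1 : ℕ) = 0 + 2 from rfl, lucasV_add_two, lucasV_one, lucasV_zero]
            linear_combination -h1' + (P^2-2) * h2'
        · right
          obtain ⟨j, rfl⟩ : ∃ j, k = j + 1 := ⟨k - 1, by omega⟩
          refine ⟨j + 3, by omega, ?_, ?_⟩
          · rw [show (j+3-1 : ℕ) = j+1+1 from by omega]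
            exact hk3
          · rw [show (j+3+1 : ℕ) = j+4 from by omega, lucasV_skip]
            rw [show (j+1-1 : ℕ) = j from by omega] at hk2
            rw [show (j+1+1 : ℕ) = j+2 from rfl] at hk3
            rw [← hk3, ← hk2]
            ring

lemma lucasV_neg (P : ℤ) : ∀ m, lucasV (-P) 1 m = (-1)^m * lucasV P 1 m
  | 0 => by simp [lucasV]
  | 1 => by simp [lucasV]
  | (m+2) => by
      rw [lucasV_add_two, lucasV_add_two, lucasV_neg P (m+1), lucasV_neg P m]; ring

open ArithmeticFunction in
lemma sigma2_self_le {n : ℕ} (hn : 0 < n) : n^2 ≤ sigma 2 n := by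
  rw [sigma_apply]
  exact Finset.single_le_sum (f := fun d => d^2) (fun i _ => Nat.zero_le _)
    (Nat.mem_divisors_self n hn.ne')

open ArithmeticFunction in
lemma sigma2_three_le {n d : ℕ} (hn : 0 < n) (hd : d ∣ n) (h1 : 1 < d) (hdn : d < n) :
    1 + d^2 + n^2 ≤ sigma 2 n := by
  rw [sigma_apply]
  have hsub : ({1, d, n} : Finset ℕ) ⊆ n.divisors := by
    intro x hx
    simp only [Finset.mem_insert, Finset.mem_singleton] at hx
    rcases hx with rfl | rfl | rfl
    · exact Nat.one_mem_divisors.mpr hn.ne'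
    · exact Nat.mem_divisors.mpr ⟨hd, hn.ne'⟩
    · exact Nat.mem_divisors_self _ hn.ne'
  calc 1 + d^2 + n^2 = ∑ x ∈ ({1, d, n} : Finset ℕ), x^2 := by
        rw [Finset.sum_insert (by simp; omega), Finset.sum_insert (by simp; omega),
          Finset.sum_singleton]
        ring
    _ ≤ ∑ x ∈ n.divisors, x^2 := Finset.sum_le_sum_of_subset hsub

open ArithmeticFunction in
lemma sigma2_prime {p : ℕ} (hp : p.Prime) : sigma 2 p = 1 + p^2 := by
  rw [sigma_apply, hp.divisors]
  rw [Finset.sum_insert (by simp [hp.one_lt.ne]), Finset.sum_singleton]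
  norm_num

open ArithmeticFunction in
lemma sigma2_prime_sq {p : ℕ} (hp : p.Prime) : sigma 2 (p^2) = 1 + p^2 + p^4 := by
  rw [sigma_apply_prime_pow hp]
  rw [Finset.sum_range_succ, Finset.sum_range_succ, Finset.sum_range_one]
  ring

open ArithmeticFunction in
lemma sigma2_prime_mul {p q : ℕ} (hp : p.Prime) (hq : q.Prime) (hne : p ≠ q) :
    sigma 2 (p*q) = (1 + p^2) * (1 + q^2) := by
  rw [isMultiplicative_sigma.map_mul_of_coprime ((Nat.coprime_primes hp hq).mpr hne),
    sigma2_prime hp, sigma2_prime hq]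

set_option maxHeartbeats 1600000 in
theorem stmt_5 (P : ℤ) (hsf : Squarefree (P ^ 2 - 4))
    (A B : ℤ) (hA : A = P ^ 2 - 2) (hB : B = -P ^ 4 + 4 * P ^ 2 + 1)
    (n : ℕ) (hn : 0 < n) (hbig : (n : ℤ) > (|A| + |B|) ^ 3)
    (heq : ((ArithmeticFunction.sigma 2) n : ℤ) - (n : ℤ) ^ 2 = A * n + B) :
    ∃ k : ℕ, 1 ≤ k ∧
      (n : ℤ) = lucasV P 1 (k - 1) * lucasV P 1 (k + 1) ∧
      Prime (lucasV P 1 (k - 1)) ∧ Prime (lucasV P 1 (k + 1)) := by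
  subst hA hB
  -- P² = 1 or P² ≥ 9
  have hPcase : P^2 = 1 ∨ 9 ≤ P^2 := by
    have h : P ≤ -3 ∨ P = -2 ∨ P = -1 ∨ P = 0 ∨ P = 1 ∨ P = 2 ∨ 3 ≤ P := by omega
    rcases h with h | rfl | rfl | rfl | rfl | rfl | h
    · right; nlinarith
    · exfalso; norm_num at hsf
    · left; norm_num
    · exfalso
      have h2 := hsf 2 (by norm_num)
      rw [Int.isUnit_iff] at h2
      omega
    · left; norm_num
    · exfalso; norm_num at hsf
    · right; nlinarith
  rcases hPcase with h1 | h9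
  · -- degenerate case P² = 1 : no solutions
    exfalso
    have e1 : P^2 - 2 = (-1 : ℤ) := by linarith
    have e2 : -P^4 + 4*P^2 + 1 = (4 : ℤ) := by linear_combination (3 - P^2) * h1
    rw [e1, e2] at hbig heq
    norm_num at hbig
    have hσ : ((n:ℤ))^2 ≤ ((ArithmeticFunction.sigma 2) n : ℤ) := by
      exact_mod_cast sigma2_self_le hn
    linarith
  -- main case P² ≥ 9
  have hP4 : 9 * P^2 ≤ P^4 := by nlinarith [sq_nonneg P]
  have hA7 : (7:ℤ) ≤ P^2 - 2 := by linarith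
  have hBneg : -P^4 + 4*P^2 + 1 ≤ -44 := by linarith
  have hSe : |(P^2-2 : ℤ)| + |(-P^4+4*P^2+1 : ℤ)| = P^4 - 3*P^2 - 3 := by
    rw [abs_of_nonneg (by linarith), abs_of_nonpos (by linarith)]
    ring
  rw [hSe] at hbig
  have hS51 : (51:ℤ) ≤ P^4 - 3*P^2 - 3 := by linarith
  have hSS : (P^4 - 3*P^2 - 3) ≤ (P^4 - 3*P^2 - 3)^3 :=
    le_self_pow₀ (by linarith) (by norm_num)
  have hn52 : (52:ℤ) ≤ (n:ℤ) := by linarith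
  have hn2 : 2 ≤ n := by exact_mod_cast (by linarith : (2:ℤ) ≤ (n:ℤ))
  -- no divisor e with 1 < e and e³ ≤ n
  have hdiv : ∀ e : ℕ, e ∣ n → 1 < e → ¬ (e^3 ≤ n) := by
    intro e he h1e h3
    have hde : n / e * e = n := Nat.div_mul_cancel he
    set d := n / e with hdd
    have hd : d ∣ n := ⟨e, hde.symm⟩
    have hd1 : e^2 ≤ d := by
      have h' : e^2 * e ≤ d * e := by
        rw [hde, ← pow_succ]
        exact h3
      exact Nat.le_of_mul_le_mul_right h' (by omega)
    have hdlt : d < n := Nat.div_lt_self hn h1e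
    have hd2 : 1 < d := by nlinarith
    have hσ3 := sigma2_three_le hn hd hd2 hdlt
    have hc : (1:ℤ) + (d:ℤ)^2 ≤ (P^2-2)*(n:ℤ) + (-P^4+4*P^2+1) := by
      have hcast : (1:ℤ) + (d:ℤ)^2 + (n:ℤ)^2 ≤ ((ArithmeticFunction.sigma 2) n : ℤ) := by
        exact_mod_cast hσ3
      linarith
    have hd3 : (n:ℤ)^2 ≤ (d:ℤ)^3 := by
      have h' : n^2 ≤ d^3 := by
        calc n^2 = (d*e)^2 := by rw [hde]
          _ = d^2 * e^2 := by ring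
          _ ≤ d^2 * d := Nat.mul_le_mul_left _ hd1
          _ = d^3 := by ring
      exact_mod_cast h'
    have hub : (P^2-2)*(n:ℤ) + (-P^4+4*P^2+1) ≤ (P^4-3*P^2-3) * n := by
      have hn0 : (0:ℤ) ≤ (n:ℤ) := by positivity
      nlinarith [mul_nonneg (show (0:ℤ) ≤ P^4-4*P^2-1 by linarith) hn0]
    have hd0 : (0:ℤ) ≤ 1 + (d:ℤ)^2 := by positivity
    have hcube : ((1:ℤ) + (d:ℤ)^2)^3 ≤ ((P^4-3*P^2-3) * n)^3 :=
      pow_le_pow_left₀ hd0 (hc.trans hub) 3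
    have h6 : ((d:ℤ)^3)^2 < ((1:ℤ) + (d:ℤ)^2)^3 := by nlinarith [sq_nonneg (d:ℤ)]
    have h4 : (n:ℤ)^4 ≤ ((d:ℤ)^3)^2 := by
      calc (n:ℤ)^4 = ((n:ℤ)^2)^2 := by ring
        _ ≤ ((d:ℤ)^3)^2 := pow_le_pow_left₀ (by positivity) hd3 2
    have h5 : ((P^4-3*P^2-3) * (n:ℤ))^3 < (n:ℤ)^4 := by
      have hn3 : (0:ℤ) < (n:ℤ)^3 := by positivity
      calc ((P^4-3*P^2-3) * (n:ℤ))^3 = (P^4-3*P^2-3)^3 * (n:ℤ)^3 := by ring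
        _ < (n:ℤ) * (n:ℤ)^3 := by
            exact mul_lt_mul_of_pos_right hbig hn3
        _ = (n:ℤ)^4 := by ring
    linarith
  -- classification via minimal prime factor
  set p := n.minFac with hpdef
  have hp : p.Prime := Nat.minFac_prime (by omega)
  have hpd : p ∣ n := Nat.minFac_dvd n
  have hp3 : ¬ (p^3 ≤ n) := hdiv p hpd hp.one_lt
  obtain ⟨m, hmp⟩ : ∃ m, p * m = n := ⟨n / p, Nat.mul_div_cancel' hpd⟩
  have hmlt : m < p^2 := by
    have h3 : n < p^3 := Nat.lt_of_not_le hp3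
    have h' : p * m < p * p^2 := by
      rw [hmp]
      calc n < p^3 := h3
        _ = p * p^2 := by ring
    exact Nat.lt_of_mul_lt_mul_left h'
  by_cases hm1 : m = 1
  · -- n is prime : contradiction
    exfalso
    have hnp : n = p := by rw [← hmp, hm1, mul_one]
    have hσ : ArithmeticFunction.sigma 2 n = 1 + n^2 := by
      rw [hnp]; exact sigma2_prime hp
    rw [hσ] at heq
    push_cast at heq
    have key : 7*(n:ℤ) ≤ (P^2-2)*(n:ℤ) := by
      have := mul_le_mul_of_nonneg_right (show (7:ℤ) ≤ P^2-2 by linarith)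
        (show (0:ℤ) ≤ (n:ℤ) by positivity)
      linarith
    linarith
  · have hm0 : m ≠ 0 := by
      intro h0
      rw [h0, mul_zero] at hmp
      omega
    have hm2 : 2 ≤ m := by omega
    set q := m.minFac with hqdef
    have hq : q.Prime := Nat.minFac_prime hm1
    have hqm : q ∣ m := Nat.minFac_dvd m
    have hmn : m ∣ n := ⟨p, by rw [← hmp]; ring⟩
    have hqn : q ∣ n := hqm.trans hmn
    have hpq : p ≤ q := Nat.minFac_le_of_dvd hq.two_le hqn
    obtain ⟨t, htq⟩ : ∃ t, q * t = m := ⟨m / q, Nat.mul_div_cancel' hqm⟩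
    have ht1 : t = 1 := by
      by_contra ht
      have ht0 : t ≠ 0 := by
        intro h0
        rw [h0, mul_zero] at htq
        omega
      have ht2 : 2 ≤ t := by omega
      have htm : t ∣ m := ⟨q, by rw [← htq]; ring⟩
      have htn : t ∣ n := htm.trans hmn
      have hpt : p ≤ t := Nat.minFac_le_of_dvd ht2 htn
      have hprod : p * p ≤ q * t := Nat.mul_le_mul hpq hpt
      rw [pow_two] at hmlt
      linarith [htq, hprod, hmlt]
    have hmq : m = q := by rw [← htq, ht1, mul_one]
    have hnpq : n = p * q := by rw [← hmp, hmq]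
    by_cases hpqe : p = q
    · -- n = p² : contradiction
      exfalso
      have hnp2 : n = q^2 := by rw [hnpq, hpqe]; ring
      have hσ : ArithmeticFunction.sigma 2 n = 1 + q^2 + q^4 := by
        rw [hnp2]; exact sigma2_prime_sq hq
      rw [hσ] at heq
      have hnq : (n:ℤ) = (q:ℤ)^2 := by exact_mod_cast congrArg (Nat.cast : ℕ → ℤ) hnp2
      push_cast at heq
      rw [hnq] at heq hbig
      -- heq : 1 + q² + q⁴ - q⁴ = (P²-2)q² + B
      have key : 6*(q:ℤ)^2 ≤ (P^2-3)*(q:ℤ)^2 := by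
        have := mul_le_mul_of_nonneg_right (show (6:ℤ) ≤ P^2-3 by linarith)
          (show (0:ℤ) ≤ (q:ℤ)^2 by positivity)
        linarith
      linarith [heq, key, hbig, hSS, hP4, h9]
    · -- n = p q with p < q : the descent applies
      have hplt : p < q := lt_of_le_of_ne hpq hpqe
      have hσ : ArithmeticFunction.sigma 2 n = (1 + p^2) * (1 + q^2) := by
        rw [hnpq]; exact sigma2_prime_mul hp hq hpqe
      rw [hσ] at heq
      have hnq : (n:ℤ) = (p:ℤ) * q := by exact_mod_cast congrArg (Nat.cast : ℕ → ℤ) hnpq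
      push_cast at heq
      rw [hnq] at heq
      have heq2 : (p:ℤ)^2 + (q:ℤ)^2 - (P^2-2)*(p:ℤ)*(q:ℤ) = 4 - (P^2-2)^2 := by
        linear_combination heq
      have hp0 : (0:ℤ) < (p:ℤ) := by exact_mod_cast hp.pos
      have hpq' : (p:ℤ) ≤ (q:ℤ) := by exact_mod_cast hpq
      have hpltq' : (p:ℤ) < (q:ℤ) := by exact_mod_cast hplt
      rcases le_or_gt 3 P with hP3 | hP3
      · -- positive P
        rcases descent P hP3 hsf q p q (le_refl _) hp0 hpq' heq2 with
          ⟨he1, he2⟩ | ⟨k, hk1, hk2, hk3⟩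
        · exfalso; rw [he1] at hpltq'; rw [he2] at hpltq'; exact lt_irrefl _ hpltq'
        · refine ⟨k, hk1, ?_, ?_, ?_⟩
          · rw [← hk2, ← hk3, hnq]
          · rw [← hk2]; exact Nat.prime_iff_prime_int.mp hp
          · rw [← hk3]; exact Nat.prime_iff_prime_int.mp hq
      · -- negative P
        have hP3' : P ≤ -3 := by
          by_contra h
          push_neg at h
          have hl : -2 ≤ P := by omega
          have hr : P ≤ 2 := by omega
          interval_cases P <;> norm_num at h9
        have hR3 : (3:ℤ) ≤ -P := by linarith
        have hsfR : Squarefree ((-P)^2 - 4) := by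
          have e : (-P)^2 - 4 = P^2 - 4 := by ring
          rw [e]; exact hsf
        have heq2R : (p:ℤ)^2 + (q:ℤ)^2 - ((-P)^2-2)*(p:ℤ)*(q:ℤ) = 4 - ((-P)^2-2)^2 := by
          linear_combination heq2
        rcases descent (-P) hR3 hsfR q p q (le_refl _) hp0 hpq' heq2R with
          ⟨he1, he2⟩ | ⟨k, hk1, hk2, hk3⟩
        · exfalso; rw [he1] at hpltq'; rw [he2] at hpltq'; exact lt_irrefl _ hpltq'
        · have hLV := lucasV_neg (-P)
          rw [neg_neg] at hLV
          obtain ⟨j, rfl⟩ : ∃ j, k = j + 1 := ⟨k - 1, by omega⟩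
          rw [show (j+1-1 : ℕ) = j from by omega] at hk2
          refine ⟨j+1, by omega, ?_, ?_, ?_⟩
          · rw [show (j+1-1 : ℕ) = j from by omega, hLV j, hLV (j+1+1), ← hk2, ← hk3, hnq]
            have hpow : ((-1:ℤ))^(j+1+1) = (-1)^j := by
              rw [pow_succ, pow_succ]; ring
            rw [hpow]
            have hsq : ((-1:ℤ)^j) * ((-1:ℤ)^j) = 1 := by
              rw [← pow_add, ← two_mul, pow_mul]; norm_num
            linear_combination (-((p:ℤ) * q)) * hsq
          · rw [show (j+1-1 : ℕ) = j from by omega, hLV j, ← hk2]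
            rw [Int.prime_iff_natAbs_prime]
            have : ((-1:ℤ)^j * (p:ℤ)).natAbs = p := by
              rw [Int.natAbs_mul, Int.natAbs_pow]
              simp
            rw [this]
            exact hp
          · rw [hLV (j+1+1), ← hk3]
            rw [Int.prime_iff_natAbs_prime]
            have : ((-1:ℤ)^(j+1+1) * (q:ℤ)).natAbs = q := by
              rw [Int.natAbs_mul, Int.natAbs_pow]
              simp
            rw [this]
            exact hq
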